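/- arXiv:1210.2165 — 4 statements merged into one kernel-verified Lean document; each statement's English description precedes it below -/
import Mathlib

section
/- Let α ≥ 0 and let v : ℤ³ → ℂ³ satisfy v_{−k} = conj(v_k) and ⟨v_k, k⟩ = 0 for every k ∈ ℤ³ (lattice vectors being regarded as elements of ℂ³). Then for all h, k ∈ ℤ³ one has the identity (⟨v_{−h}, k−h⟩/(1+α‖−h‖²))·⟨v_k, v_{k−h}⟩ = conj( (⟨v_h, k⟩/(1+α‖h‖²))·⟨v_{k−h}, v_k⟩ ). (This says that in the formal energy balance for the inviscid Leray-α model the addend with indices (h′,k′) = (−h, k−h) is the complex conjugate of the addend with indices (h,k), so in the sum the imaginary parts cancel in pairs and the energy ½Σ_k‖v_k‖² is formally conserved.) -/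
open scoped BigOperators ComplexConjugate

noncomputable section

/-- The lattice `ℤ³`. -/
abbrev Z3 := Fin 3 → ℤ
/-- `ℂ³` with its Hermitian (Euclidean) norm. -/
abbrev C3 := EuclideanSpace ℂ (Fin 3)
/-- `ℝ³` with its Euclidean norm. -/
abbrev R3 := EuclideanSpace ℝ (Fin 3)

/-- Hermitian inner product `⟨x,y⟩ = ∑_j x_j conj(y_j)` (conjugate-linear in the second slot),
as used in the paper. -/
def hinner (x y : C3) : ℂ := ∑ j, x j * conj (y j)

/-- A lattice vector regarded as an element of `ℂ³`. -/
def latC (k : Z3) : C3 := WithLp.toLp 2 (fun j => (k j : ℂ))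

/-- A lattice vector regarded as an element of `ℝ³`. -/
def latR (k : Z3) : R3 := WithLp.toLp 2 (fun j => (k j : ℝ))

/-- Squared Euclidean norm `‖k‖²` of a lattice vector `k`. -/
def nsq (k : Z3) : ℝ := ∑ j, ((k j : ℝ))^2

/-- Euclidean norm `‖k‖` of a lattice vector `k`. -/
def znorm (k : Z3) : ℝ := Real.sqrt (nsq k)

/-- Orthogonal projection of `ℂ³` onto the orthogonal complement of the lattice vector `k`:
`P_k(v) = v - (⟨v,k⟩/⟨k,k⟩) k`. -/
def Pk (k : Z3) (v : C3) : C3 := v - (hinner v (latC k) / hinner (latC k) (latC k)) • latC k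

/-- Componentwise complex conjugation on `ℂ³`. -/
def conjC3 (x : C3) : C3 := WithLp.toLp 2 (fun j => conj (x j))

/-- Orthogonal projection of `ℝ³` onto the orthogonal complement of the lattice vector `h`. -/
def PkR (h : Z3) (v : R3) : R3 := v - ((∑ j, v j * (h j : ℝ)) / nsq h) • latR h

/-- `‖P_h(k)‖`: the Euclidean norm of the projection of the lattice vector `k`
onto the orthogonal complement of the lattice vector `h`. -/
def projNorm (h k : Z3) : ℝ := ‖PkR h (latR k)‖

/-- The set `Γ_N = {k ∈ ℤ³ : 0 < ‖k‖ < N}` of active Fourier modes of the Galerkin system,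
realized as a `Finset` (note that `0 < ‖k‖ ↔ k ≠ 0` and `‖k‖ < N ↔ ∑_j k_j² < N²`). -/
def GammaN (N : ℕ) : Finset Z3 :=
  (Finset.Icc (fun _ => -(N:ℤ)) (fun _ => (N:ℤ))).filter
    (fun k => k ≠ 0 ∧ (∑ j, (k j)^2) < (N:ℤ)^2)


lemma hinner_conj_swap (x y : C3) : conj (hinner x y) = hinner y x := by
  simp [hinner, map_sum, mul_comm]

lemma hinner_conjC3_latC (x : C3) (m : Z3) :
    hinner (conjC3 x) (latC m) = conj (hinner x (latC m)) := by
  simp [hinner, conjC3, latC, map_sum]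

lemma nsq_neg (h : Z3) : nsq (-h) = nsq h := by
  simp [nsq]

lemma hinner_latC_sub (x : C3) (a b : Z3) :
    hinner x (latC (a - b)) = hinner x (latC a) - hinner x (latC b) := by
  simp [hinner, latC, mul_sub, Finset.sum_sub_distrib, Pi.sub_apply]

/-- for `α ≥ 0` and `v : ℤ³ → ℂ³` with `v_{-k} = conj(v_k)` and `⟨v_k, k⟩ = 0`,
the addend of the formal energy balance with indices `(-h, k-h)` is the complex conjugate of
the addend with indices `(h, k)`. -/
theorem addends_conjugate (α : ℝ) (hα : 0 ≤ α) (v : Z3 → C3)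
    (hconj : ∀ k : Z3, v (-k) = conjC3 (v k))
    (hdiv : ∀ k : Z3, hinner (v k) (latC k) = 0) :
    ∀ h k : Z3,
      (hinner (v (-h)) (latC (k - h)) / ((1 + α * nsq (-h) : ℝ) : ℂ))
          * hinner (v k) (v (k - h))
        = conj ((hinner (v h) (latC k) / ((1 + α * nsq h : ℝ) : ℂ))
          * hinner (v (k - h)) (v k)) := by
  intro h k
  have h1 : hinner (v (-h)) (latC (k - h)) = conj (hinner (v h) (latC k)) := by
    rw [hconj, hinner_conjC3_latC, hinner_latC_sub, hdiv, sub_zero]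
  rw [h1, nsq_neg, ← hinner_conj_swap (v (k - h)) (v k)]
  rw [map_mul, map_div₀, Complex.conj_ofReal]
end
end

section
/- Let α ≥ 0 and let v : ℤ³ → ℂ³ satisfy Σ_{h∈ℤ³} ‖v_h‖² < ∞. Then for every nonzero k ∈ ℤ³ the family h ↦ (⟨v_h, k⟩/(1+α‖h‖²)) P_k(v_{k−h}), indexed by h ∈ ℤ³, is absolutely summable, and its sum satisfies ‖ Σ_{h∈ℤ³} (⟨v_h, k⟩/(1+α‖h‖²)) P_k(v_{k−h}) ‖ ≤ (Σ_{h∈ℤ³} ‖v_h‖²) · ‖k‖. (Hence the right-hand side of the Fourier formulation of the inviscid Leray-α model is well defined on sequences of finite energy.) -/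
open scoped BigOperators ComplexConjugate

set_option maxHeartbeats 1000000

noncomputable section

/-! ### Auxiliary lemmas -/

lemma hinner_eq_inner (x y : C3) : hinner x y = inner (𝕜 := ℂ) y x := by
  simp [hinner, PiLp.inner_apply, RCLike.inner_apply, mul_comm]

lemma norm_hinner_le (x y : C3) : ‖hinner x y‖ ≤ ‖x‖ * ‖y‖ := by
  rw [hinner_eq_inner]
  exact (norm_inner_le_norm (𝕜 := ℂ) y x).trans_eq (mul_comm _ _)

lemma norm_latC (k : Z3) : ‖latC k‖ = znorm k := by
  rw [EuclideanSpace.norm_eq, znorm, nsq]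
  congr 1
  refine Finset.sum_congr rfl fun j _ => ?_
  simp [latC, Complex.norm_intCast, Int.cast_abs, sq_abs]

lemma nsq_nonneg (k : Z3) : 0 ≤ nsq k := Finset.sum_nonneg fun j _ => sq_nonneg _

lemma nsq_pos (k : Z3) (hk : k ≠ 0) : 0 < nsq k := by
  rcases (nsq_nonneg k).lt_or_eq with h | h
  · exact h
  · exfalso
    apply hk
    funext j
    have := (Finset.sum_eq_zero_iff_of_nonneg (fun j _ => sq_nonneg ((k j : ℝ)))).1 h.symm
      j (Finset.mem_univ j)
    have : (k j : ℝ) = 0 := by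
      have := sq_eq_zero_iff.1 this
      exact this
    exact_mod_cast this

lemma hinner_sub_left (x y z : C3) : hinner (x - y) z = hinner x z - hinner y z := by
  simp [hinner, sub_mul, Finset.sum_sub_distrib]

lemma hinner_smul_left (c : ℂ) (x y : C3) : hinner (c • x) y = c * hinner x y := by
  simp [hinner, Finset.mul_sum, mul_assoc]

lemma hinner_latC_self (k : Z3) : hinner (latC k) (latC k) = (nsq k : ℂ) := by
  simp [hinner, latC, nsq, pow_two]

lemma norm_Pk_le (k : Z3) (hk : k ≠ 0) (w : C3) : ‖Pk k w‖ ≤ ‖w‖ := by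
  set u := latC k with hu
  set c := hinner w u / hinner u u with hc
  have huu : hinner u u = (nsq k : ℂ) := hinner_latC_self k
  have hne : hinner u u ≠ 0 := by
    rw [huu]
    exact_mod_cast (nsq_pos k hk).ne'
  have horth : hinner (Pk k w) u = 0 := by
    rw [Pk, hinner_sub_left, hinner_smul_left, ← hc, div_mul_cancel₀ _ hne, sub_self]
  have hinner0 : inner (𝕜 := ℂ) (c • u) (Pk k w) = 0 := by
    rw [inner_smul_left, ← hinner_eq_inner, horth, mul_zero]
  have hdecomp : c • u + Pk k w = w := by
    rw [Pk]; abel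
  have hsq := norm_add_sq_eq_norm_sq_add_norm_sq_of_inner_eq_zero (c • u) (Pk k w) hinner0
  rw [hdecomp] at hsq
  nlinarith [norm_nonneg (Pk k w), norm_nonneg w, mul_self_nonneg ‖c • u‖]

/-- on finite-energy sequences the right-hand side of the Fourier formulation of
the inviscid Leray-α model is well defined: for every nonzero `k` the family
`h ↦ (⟨v_h,k⟩/(1+α‖h‖²)) P_k(v_{k-h})` is absolutely summable and its sum is bounded in norm by
`(∑_h ‖v_h‖²)·‖k‖`. -/
theorem rhs_well_defined (α : ℝ) (hα : 0 ≤ α) (v : Z3 → C3)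
    (hsum : Summable (fun h : Z3 => ‖v h‖ ^ 2)) :
    ∀ k : Z3, k ≠ 0 →
      Summable (fun h : Z3 =>
        ‖(hinner (v h) (latC k) / ((1 + α * nsq h : ℝ) : ℂ)) • Pk k (v (k - h))‖) ∧
      ‖∑' h : Z3, (hinner (v h) (latC k) / ((1 + α * nsq h : ℝ) : ℂ)) • Pk k (v (k - h))‖
        ≤ (∑' h : Z3, ‖v h‖ ^ 2) * znorm k := by
  intro k hk
  have hK0 : 0 ≤ znorm k := Real.sqrt_nonneg _
  -- the shifted energies are summable with the same sum
  have hsum2 : Summable (fun h : Z3 => ‖v (k - h)‖ ^ 2) :=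
    (Equiv.subLeft k).summable_iff.2 hsum
  have htsum2 : (∑' h : Z3, ‖v (k - h)‖ ^ 2) = ∑' h : Z3, ‖v h‖ ^ 2 :=
    (Equiv.subLeft k).tsum_eq (fun h => ‖v h‖ ^ 2)
  -- pointwise bound
  have hbound : ∀ h : Z3,
      ‖(hinner (v h) (latC k) / ((1 + α * nsq h : ℝ) : ℂ)) • Pk k (v (k - h))‖
        ≤ znorm k / 2 * (‖v h‖ ^ 2 + ‖v (k - h)‖ ^ 2) := by
    intro h
    have hden : (1 : ℝ) ≤ ‖((1 + α * nsq h : ℝ) : ℂ)‖ := by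
      rw [Complex.norm_real, Real.norm_eq_abs,
        abs_of_pos (by nlinarith [nsq_nonneg h, mul_nonneg hα (nsq_nonneg h)])]
      nlinarith [mul_nonneg hα (nsq_nonneg h)]
    have h1 : ‖hinner (v h) (latC k) / ((1 + α * nsq h : ℝ) : ℂ)‖
        ≤ ‖v h‖ * znorm k := by
      rw [norm_div]
      calc ‖hinner (v h) (latC k)‖ / ‖((1 + α * nsq h : ℝ) : ℂ)‖
          ≤ ‖hinner (v h) (latC k)‖ := div_le_self (norm_nonneg _) hden
        _ ≤ ‖v h‖ * ‖latC k‖ := norm_hinner_le _ _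
        _ = ‖v h‖ * znorm k := by rw [norm_latC]
    have h2 : ‖Pk k (v (k - h))‖ ≤ ‖v (k - h)‖ := norm_Pk_le k hk _
    rw [norm_smul]
    calc ‖hinner (v h) (latC k) / ((1 + α * nsq h : ℝ) : ℂ)‖ * ‖Pk k (v (k - h))‖
        ≤ (‖v h‖ * znorm k) * ‖v (k - h)‖ :=
          mul_le_mul h1 h2 (norm_nonneg _) (mul_nonneg (norm_nonneg _) hK0)
      _ ≤ znorm k / 2 * (‖v h‖ ^ 2 + ‖v (k - h)‖ ^ 2) := by
          nlinarith [sq_nonneg (‖v h‖ - ‖v (k - h)‖), norm_nonneg (v h),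
            norm_nonneg (v (k - h))]
  have hbsum : Summable (fun h : Z3 => znorm k / 2 * (‖v h‖ ^ 2 + ‖v (k - h)‖ ^ 2)) :=
    (hsum.add hsum2).mul_left _
  have hnsum : Summable (fun h : Z3 =>
      ‖(hinner (v h) (latC k) / ((1 + α * nsq h : ℝ) : ℂ)) • Pk k (v (k - h))‖) :=
    Summable.of_nonneg_of_le (fun h => norm_nonneg _) hbound hbsum
  refine ⟨hnsum, ?_⟩
  calc ‖∑' h : Z3, (hinner (v h) (latC k) / ((1 + α * nsq h : ℝ) : ℂ)) • Pk k (v (k - h))‖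
      ≤ ∑' h : Z3, ‖(hinner (v h) (latC k) / ((1 + α * nsq h : ℝ) : ℂ)) • Pk k (v (k - h))‖ :=
        norm_tsum_le_tsum_norm hnsum
    _ ≤ ∑' h : Z3, znorm k / 2 * (‖v h‖ ^ 2 + ‖v (k - h)‖ ^ 2) :=
        Summable.tsum_le_tsum hbound hnsum hbsum
    _ = znorm k / 2 * ((∑' h : Z3, ‖v h‖ ^ 2) + ∑' h : Z3, ‖v (k - h)‖ ^ 2) := by
        rw [tsum_mul_left, Summable.tsum_add hsum hsum2]
    _ = (∑' h : Z3, ‖v h‖ ^ 2) * znorm k := by rw [htsum2]; ring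
end
end

section
/- Let α ≥ 0, N ∈ ℕ and let initial data y_k ∈ ℂ³ for k ∈ Γ_N be given with ⟨y_k, k⟩ = 0 and y_{−k} = conj(y_k) for all k ∈ Γ_N. Then there exists a family of differentiable functions v_k : [0,∞) → ℂ³ (k ∈ Γ_N) solving the Galerkin system dv_k/dt(t) = −i Σ_{h ∈ Γ_N, k−h ∈ Γ_N} (⟨v_h(t),k⟩/(1+α‖h‖²)) P_k(v_{k−h}(t)) with v_k(0) = y_k, which is global in time and satisfies for all t ≥ 0 and all k ∈ Γ_N: ⟨v_k(t),k⟩ = 0, v_{−k}(t) = conj(v_k(t)), and Σ_{k∈Γ_N} ‖v_k(t)‖² = Σ_{k∈Γ_N} ‖y_k‖². -/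
open scoped BigOperators ComplexConjugate

noncomputable section

namespace Gal

-- basic lemmas
lemma mem_gamma_neg {N : ℕ} {k : Z3} (hk : k ∈ GammaN N) : -k ∈ GammaN N := by
  simp only [GammaN, Finset.mem_filter, Finset.mem_Icc, Pi.le_def] at hk ⊢
  obtain ⟨⟨h1, h2⟩, h3, h4⟩ := hk
  refine ⟨⟨fun j => by simpa using neg_le_neg (h2 j), fun j => by simpa using neg_le_neg (h1 j)⟩,
    by simpa using h3, by simpa using h4⟩

lemma gamma_ne_zero {N : ℕ} {k : Z3} (hk : k ∈ GammaN N) : k ≠ 0 := by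
  simp only [GammaN, Finset.mem_filter] at hk; exact hk.2.1

lemma one_le_nsq {k : Z3} (hk : k ≠ 0) : 1 ≤ nsq k := by
  have : ∃ j, k j ≠ 0 := by
    by_contra h; push_neg at h; exact hk (funext h)
  obtain ⟨j, hj⟩ := this
  have h1 : (1:ℝ) ≤ ((k j : ℝ))^2 := by
    have h2 : (1:ℤ) ≤ (k j)^2 := by
      rcases lt_or_gt_of_ne hj with h | h
      · nlinarith
      · nlinarith
    exact_mod_cast h2
  calc (1:ℝ) ≤ ((k j : ℝ))^2 := h1
    _ ≤ nsq k := Finset.single_le_sum (f := fun j => ((k j:ℝ))^2) (fun _ _ => sq_nonneg _) (Finset.mem_univ j)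

lemma nsq_pos {k : Z3} (hk : k ≠ 0) : 0 < nsq k := lt_of_lt_of_le one_pos (one_le_nsq hk)

lemma nsq_neg (k : Z3) : nsq (-k) = nsq k := by
  simp [nsq]

lemma latC_neg (k : Z3) : latC (-k) = - latC k := by
  ext j; simp [latC]

lemma latC_sub (k h : Z3) : latC (k - h) = latC k - latC h := by
  ext j; simp [latC]

lemma abs_coord_le {N : ℕ} {k : Z3} (hk : k ∈ GammaN N) (j : Fin 3) : |(k j : ℝ)| ≤ N := by
  simp only [GammaN, Finset.mem_filter, Finset.mem_Icc, Pi.le_def] at hk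
  rw [abs_le]
  constructor
  · exact_mod_cast hk.1.1 j
  · exact_mod_cast hk.1.2 j


-- hinner lemmas
lemma hinner_add_left (x y z : C3) : hinner (x + y) z = hinner x z + hinner y z := by
  simp [hinner, add_mul, Finset.sum_add_distrib]

lemma hinner_sub_left (x y z : C3) : hinner (x - y) z = hinner x z - hinner y z := by
  simp [hinner, sub_mul, Finset.sum_sub_distrib]

lemma hinner_smul_left (c : ℂ) (x z : C3) : hinner (c • x) z = c * hinner x z := by
  simp [hinner, Finset.mul_sum, mul_assoc]

lemma hinner_sub_right (x y z : C3) : hinner x (y - z) = hinner x y - hinner x z := by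
  simp [hinner, mul_sub, Finset.sum_sub_distrib]

lemma hinner_neg_right (x y : C3) : hinner x (-y) = - hinner x y := by
  simp [hinner, Finset.sum_neg_distrib]

lemma hinner_zero_left (z : C3) : hinner 0 z = 0 := by simp [hinner]

lemma hinner_sum_left {ι : Type*} (s : Finset ι) (f : ι → C3) (z : C3) :
    hinner (∑ i ∈ s, f i) z = ∑ i ∈ s, hinner (f i) z := by
  simp only [hinner]
  rw [Finset.sum_comm]
  congr 1; funext j
  rw [WithLp.ofLp_sum, Finset.sum_apply j s (fun i => (f i).ofLp), Finset.sum_mul]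

lemma hinner_comm (x y : C3) : hinner x y = conj (hinner y x) := by
  simp [hinner, mul_comm]

lemma hinner_latC_self (k : Z3) : hinner (latC k) (latC k) = (nsq k : ℂ) := by
  simp only [hinner, latC, nsq, PiLp.toLp_apply]
  push_cast
  congr 1; funext j
  rw [map_intCast (starRingEnd ℂ)]
  ring

lemma conj_hinner_latC (x : C3) (k : Z3) :
    conj (hinner x (latC k)) = hinner (conjC3 x) (latC k) := by
  simp [hinner, conjC3, latC]

lemma hinner_latC_neg (x : C3) (k : Z3) : hinner x (latC (-k)) = - hinner x (latC k) := by
  rw [latC_neg, hinner_neg_right]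

-- Pk lemmas
lemma Pk_apply (k : Z3) (v : C3) (j : Fin 3) :
    Pk k v j = v j - (hinner v (latC k) / (nsq k : ℂ)) * (k j : ℂ) := by
  rw [Pk, hinner_latC_self, PiLp.sub_apply, PiLp.smul_apply, smul_eq_mul]
  rfl

lemma hinner_Pk_latC {k : Z3} (hk : k ≠ 0) (x : C3) : hinner (Pk k x) (latC k) = 0 := by
  have hnsq : (nsq k : ℂ) ≠ 0 := by
    simpa using ne_of_gt (nsq_pos hk)
  rw [Pk, hinner_sub_left, hinner_smul_left, hinner_latC_self]
  field_simp
  ring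

lemma Pk_sub (k : Z3) (x y : C3) : Pk k (x - y) = Pk k x - Pk k y := by
  ext j
  simp only [Pk_apply, hinner_sub_left, PiLp.sub_apply]
  ring

lemma Pk_smul (k : Z3) (c : ℂ) (x : C3) : Pk k (c • x) = c • Pk k x := by
  ext j
  simp only [Pk_apply, hinner_smul_left, PiLp.smul_apply, smul_eq_mul]
  ring

lemma Pk_neg_idx (k : Z3) (x : C3) : Pk (-k) x = Pk k x := by
  ext j
  simp only [Pk_apply, hinner_latC_neg, nsq_neg, Pi.neg_apply, Int.cast_neg]
  ring

lemma conjC3_Pk (k : Z3) (x : C3) : conjC3 (Pk k x) = Pk k (conjC3 x) := by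
  ext j
  simp only [conjC3, PiLp.toLp_apply, Pk_apply, map_sub, map_mul, map_div₀, conj_hinner_latC,
    Complex.conj_ofReal, map_intCast (starRingEnd ℂ)]

lemma conjC3_zero : conjC3 0 = 0 := by ext j; simp [conjC3]

lemma conjC3_conjC3 (x : C3) : conjC3 (conjC3 x) = x := by ext j; simp [conjC3]


-- state space
abbrev Idx (N : ℕ) := {k : Z3 // k ∈ GammaN N}
abbrev ES (N : ℕ) := (Idx N × Fin 3) → ℂ

def uext {N : ℕ} (u : ES N) (k : Z3) : C3 :=
  if h : k ∈ GammaN N then WithLp.toLp 2 (fun j => u (⟨k, h⟩, j)) else 0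

lemma uext_apply {N : ℕ} (u : ES N) {k : Z3} (hk : k ∈ GammaN N) (j : Fin 3) :
    uext u k j = u (⟨k, hk⟩, j) := by
  simp [uext, dif_pos hk]

lemma uext_not_mem {N : ℕ} (u : ES N) {k : Z3} (hk : k ∉ GammaN N) : uext u k = 0 := by
  simp [uext, dif_neg hk]

lemma uext_sub {N : ℕ} (u w : ES N) (k : Z3) : uext (u - w) k = uext u k - uext w k := by
  by_cases hk : k ∈ GammaN N
  · ext j
    simp [uext_apply _ hk]
  · simp [uext_not_mem _ hk]

lemma uext_smul {N : ℕ} (c : ℂ) (u : ES N) (k : Z3) : uext (c • u) k = c • uext u k := by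
  by_cases hk : k ∈ GammaN N
  · ext j
    simp [uext_apply _ hk]
  · simp [uext_not_mem _ hk]

lemma uext_add {N : ℕ} (u w : ES N) (k : Z3) : uext (u + w) k = uext u k + uext w k := by
  by_cases hk : k ∈ GammaN N
  · ext j
    simp [uext_apply _ hk]
  · simp [uext_not_mem _ hk]

lemma abs_uext_le {N : ℕ} (u : ES N) (k : Z3) (j : Fin 3) : ‖uext u k j‖ ≤ ‖u‖ := by
  by_cases hk : k ∈ GammaN N
  · rw [uext_apply _ hk]
    exact norm_le_pi_norm u (⟨k, hk⟩, j)
  · simp [uext_not_mem _ hk]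

def sigmaE {N : ℕ} (u : ES N) : ES N :=
  fun p => conj (u (⟨-p.1.1, mem_gamma_neg p.1.2⟩, p.2))

lemma uext_sigma {N : ℕ} (u : ES N) (k : Z3) :
    uext (sigmaE u) k = conjC3 (uext u (-k)) := by
  by_cases hk : k ∈ GammaN N
  · ext j
    show _ = conj (uext u (-k) j)
    rw [uext_apply _ hk, uext_apply _ (mem_gamma_neg hk)]
    rfl
  · have hk' : -k ∉ GammaN N := fun h => hk (by simpa using mem_gamma_neg h)
    rw [uext_not_mem _ hk, uext_not_mem _ hk', conjC3_zero]

def F2 (α : ℝ) {N : ℕ} (u w : ES N) : ES N := fun p =>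
  ((-Complex.I) • ∑ h ∈ (GammaN N).filter (fun h => (p.1.1 : Z3) - h ∈ GammaN N),
    (hinner (uext u h) (latC p.1.1) / ((1 + α * nsq h : ℝ) : ℂ)) •
      Pk p.1.1 (uext w (p.1.1 - h))) p.2

lemma F2_apply (α : ℝ) {N : ℕ} (u w : ES N) (k : Idx N) (j : Fin 3) :
    F2 α u w (k, j) = -Complex.I * ∑ h ∈ (GammaN N).filter (fun h => (k.1 : Z3) - h ∈ GammaN N),
      (hinner (uext u h) (latC k.1) / ((1 + α * nsq h : ℝ) : ℂ)) *
        Pk k.1 (uext w (k.1 - h)) j := by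
  have h1 : F2 α u w (k, j) =
      ((-Complex.I) • ∑ h ∈ (GammaN N).filter (fun h => (k.1 : Z3) - h ∈ GammaN N),
        (hinner (uext u h) (latC k.1) / ((1 + α * nsq h : ℝ) : ℂ)) •
          Pk k.1 (uext w (k.1 - h)) : C3) j := rfl
  rw [h1, PiLp.smul_apply, smul_eq_mul, WithLp.ofLp_sum,
    Finset.sum_apply j _ (fun h => ((hinner (uext u h) (latC k.1) / ((1 + α * nsq h : ℝ) : ℂ)) •
      Pk k.1 (uext w (k.1 - h))).ofLp)]
  congr 1


lemma uext_F2 (α : ℝ) {N : ℕ} (u w : ES N) {k : Z3} (hk : k ∈ GammaN N) :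
    uext (F2 α u w) k = (-Complex.I) • ∑ h ∈ (GammaN N).filter (fun h => k - h ∈ GammaN N),
      (hinner (uext u h) (latC k) / ((1 + α * nsq h : ℝ) : ℂ)) • Pk k (uext w (k - h)) := by
  ext j
  rw [uext_apply _ hk, F2_apply, PiLp.smul_apply, smul_eq_mul, WithLp.ofLp_sum,
    Finset.sum_apply j _ (fun h => ((hinner (uext u h) (latC k) / ((1 + α * nsq h : ℝ) : ℂ)) •
      Pk k (uext w (k - h))).ofLp)]
  congr 1

lemma F2_sub_left (α : ℝ) {N : ℕ} (u u' w : ES N) :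
    F2 α (u - u') w = F2 α u w - F2 α u' w := by
  funext p
  obtain ⟨k, j⟩ := p
  simp only [Pi.sub_apply, F2_apply, uext_sub, hinner_sub_left, sub_div, sub_mul,
    Finset.sum_sub_distrib, mul_sub]

lemma F2_sub_right (α : ℝ) {N : ℕ} (u w w' : ES N) :
    F2 α u (w - w') = F2 α u w - F2 α u w' := by
  funext p
  obtain ⟨k, j⟩ := p
  simp only [Pi.sub_apply, F2_apply, uext_sub, Pk_sub, PiLp.sub_apply, mul_sub,
    Finset.sum_sub_distrib]

lemma F2_smul_left (α : ℝ) {N : ℕ} (c : ℂ) (u w : ES N) :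
    F2 α (c • u) w = c • F2 α u w := by
  funext p
  obtain ⟨k, j⟩ := p
  simp only [Pi.smul_apply, smul_eq_mul, F2_apply, uext_smul, hinner_smul_left, mul_div_assoc,
    mul_assoc, ← Finset.mul_sum]
  ring

lemma F2_smul_right (α : ℝ) {N : ℕ} (c : ℂ) (u w : ES N) :
    F2 α u (c • w) = c • F2 α u w := by
  funext p
  obtain ⟨k, j⟩ := p
  simp only [Pi.smul_apply, smul_eq_mul, F2_apply, uext_smul, Pk_smul, PiLp.smul_apply,
    smul_eq_mul]
  rw [Finset.sum_congr rfl (fun h _ => show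
      (hinner (uext u h) (latC k.1) / ((1 + α * nsq h : ℝ) : ℂ)) * (c * Pk k.1 (uext w (k.1 - h)) j)
      = c * ((hinner (uext u h) (latC k.1) / ((1 + α * nsq h : ℝ) : ℂ)) *
          Pk k.1 (uext w (k.1 - h)) j) from by ring), ← Finset.mul_sum]
  ring

lemma divfree_F2 (α : ℝ) {N : ℕ} (u w : ES N) {k : Z3} (hk : k ∈ GammaN N) :
    hinner (uext (F2 α u w) k) (latC k) = 0 := by
  rw [uext_F2 α u w hk, hinner_smul_left, hinner_sum_left]
  rw [Finset.sum_congr rfl (fun h _ => by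
    rw [hinner_smul_left, hinner_Pk_latC (gamma_ne_zero hk), mul_zero])]
  simp

lemma sigma_F2 (α : ℝ) {N : ℕ} (u w : ES N) :
    sigmaE (F2 α u w) = F2 α (sigmaE u) (sigmaE w) := by
  funext p
  obtain ⟨k, j⟩ := p
  show conj (F2 α u w (⟨-k.1, mem_gamma_neg k.2⟩, j)) = F2 α (sigmaE u) (sigmaE w) (k, j)
  rw [F2_apply, F2_apply]
  have hconj : ∀ h ∈ (GammaN N).filter (fun h => (k.1 : Z3) - h ∈ GammaN N),
      (hinner (uext (sigmaE u) h) (latC k.1) / ((1 + α * nsq h : ℝ) : ℂ)) *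
        Pk (k.1 : Z3) (uext (sigmaE w) (k.1 - h)) j
      = conj ((hinner (uext u (-h)) (latC k.1) / ((1 + α * nsq h : ℝ) : ℂ)) *
          Pk (k.1 : Z3) (uext w (h - k.1)) j) := by
    intro h _
    rw [uext_sigma, uext_sigma, ← conj_hinner_latC, neg_sub, ← conjC3_Pk]
    rw [map_mul, map_div₀, Complex.conj_ofReal]
    rfl
  rw [Finset.sum_congr rfl hconj]
  have key : (∑ h ∈ (GammaN N).filter (fun h => (-(k.1:Z3)) - h ∈ GammaN N),
      (hinner (uext u h) (latC (-k.1)) / ((1 + α * nsq h : ℝ) : ℂ)) *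
        Pk (-k.1 : Z3) (uext w (-k.1 - h)) j)
      = - ∑ h ∈ (GammaN N).filter (fun h => (k.1:Z3) - h ∈ GammaN N),
        ((hinner (uext u (-h)) (latC k.1) / ((1 + α * nsq h : ℝ) : ℂ)) *
          Pk (k.1 : Z3) (uext w (h - k.1)) j) := by
    rw [← Finset.sum_neg_distrib]
    refine Finset.sum_nbij' (fun h => -h) (fun h => -h) ?_ ?_
      (fun a _ => neg_neg a) (fun a _ => neg_neg a) ?_
    · intro a ha
      simp only [Finset.mem_filter] at ha ⊢
      refine ⟨mem_gamma_neg ha.1, ?_⟩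
      have h2 := mem_gamma_neg ha.2
      have : (k.1 : Z3) - -a = -(-(k.1:Z3) - a) := by ring
      rwa [this]
    · intro a ha
      simp only [Finset.mem_filter] at ha ⊢
      refine ⟨mem_gamma_neg ha.1, ?_⟩
      have h2 := mem_gamma_neg ha.2
      have : (-(k.1:Z3)) - -a = -((k.1:Z3) - a) := by ring
      rwa [this]
    · intro a _
      rw [hinner_latC_neg, Pk_neg_idx, neg_neg, nsq_neg]
      have e : (-(k.1:Z3)) - a = -a - k.1 := by ring
      rw [e]
      ring
  rw [key]
  simp only [map_mul, map_neg, map_sum, Complex.conj_I]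
  ring


lemma nsq_nonneg (k : Z3) : 0 ≤ nsq k := by
  unfold nsq; positivity

lemma abs_hinner_latC_le {N : ℕ} {k : Z3} (hk : k ∈ GammaN N) (x : C3) {M : ℝ}
    (hx : ∀ j, ‖x j‖ ≤ M) :
    ‖hinner x (latC k)‖ ≤ 3 * N * M := by
  have hM : 0 ≤ M := le_trans (norm_nonneg _) (hx 0)
  calc ‖hinner x (latC k)‖ ≤ ∑ j, ‖x j * conj (latC k j)‖ :=
        norm_sum_le _ _
    _ ≤ ∑ j : Fin 3, M * N := by
        refine Finset.sum_le_sum (fun j _ => ?_)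
        rw [norm_mul, Complex.norm_conj]
        have h1 : ‖latC k j‖ ≤ N := by
          rw [show latC k j = ((k j : ℤ) : ℂ) from rfl, Complex.norm_intCast]
          exact_mod_cast abs_coord_le hk j
        exact mul_le_mul (hx j) h1 (norm_nonneg _) hM
    _ = 3 * N * M := by simp [Finset.sum_const]; ring

lemma abs_Pk_le {N : ℕ} {k : Z3} (hk : k ∈ GammaN N) (x : C3) {M : ℝ}
    (hx : ∀ j, ‖x j‖ ≤ M) (j : Fin 3) :
    ‖Pk k x j‖ ≤ (1 + 3 * (N:ℝ)^2) * M := by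
  have hM : 0 ≤ M := le_trans (norm_nonneg _) (hx 0)
  have h1 : (1:ℝ) ≤ nsq k := one_le_nsq (gamma_ne_zero hk)
  rw [Pk_apply]
  calc ‖x j - hinner x (latC k) / (nsq k : ℂ) * (k j : ℂ)‖
      ≤ ‖x j‖ + ‖hinner x (latC k) / (nsq k : ℂ) * (k j : ℂ)‖ := by
        exact (norm_sub_le _ _)
    _ ≤ M + (3 * N * M) * N := by
        refine add_le_add (hx j) ?_
        rw [norm_mul, norm_div]
        have hden : ‖(nsq k : ℂ)‖ = nsq k := by
          rw [Complex.norm_real, Real.norm_eq_abs, abs_of_nonneg (nsq_nonneg k)]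
        have hdiv : ‖hinner x (latC k)‖ / ‖(nsq k : ℂ)‖
            ≤ 3 * N * M := by
          rw [hden]
          calc ‖hinner x (latC k)‖ / nsq k ≤ ‖hinner x (latC k)‖ / 1 :=
                div_le_div_of_nonneg_left (norm_nonneg _) one_pos h1
            _ = ‖hinner x (latC k)‖ := div_one _
            _ ≤ 3 * N * M := abs_hinner_latC_le hk x hx
        have hkj : ‖(k j : ℂ)‖ ≤ N := by
          rw [show ((k j : ℤ) : ℂ) = ((k j : ℤ) : ℂ) from rfl, Complex.norm_intCast]
          exact_mod_cast abs_coord_le hk j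
        exact mul_le_mul hdiv hkj (norm_nonneg _) (by positivity)
    _ = (1 + 3 * (N:ℝ)^2) * M := by ring

def CF (N : ℕ) : ℝ := (GammaN N).card * ((3 * N) * (1 + 3 * (N:ℝ)^2))

lemma CF_nonneg (N : ℕ) : 0 ≤ CF N := by unfold CF; positivity

lemma abs_F2_le {α : ℝ} (hα : 0 ≤ α) {N : ℕ} (u w : ES N) (p : Idx N × Fin 3) :
    ‖F2 α u w p‖ ≤ CF N * ‖u‖ * ‖w‖ := by
  obtain ⟨k, j⟩ := p
  rw [F2_apply, norm_mul]
  have hI : ‖-Complex.I‖ = 1 := by simp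
  rw [hI, one_mul]
  have hterm : ∀ h ∈ (GammaN N).filter (fun h => (k.1:Z3) - h ∈ GammaN N),
      ‖(hinner (uext u h) (latC k.1) / ((1 + α * nsq h : ℝ) : ℂ)) *
        Pk k.1 (uext w (k.1 - h)) j‖
      ≤ (3 * N * ‖u‖) * ((1 + 3 * (N:ℝ)^2) * ‖w‖) := by
    intro h hh
    rw [Finset.mem_filter] at hh
    rw [norm_mul, norm_div]
    have hden : (1:ℝ) ≤ ‖((1 + α * nsq h : ℝ) : ℂ)‖ := by
      rw [Complex.norm_real, Real.norm_eq_abs, abs_of_nonneg (by nlinarith [nsq_nonneg h])]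
      nlinarith [nsq_nonneg h]
    have h1 : ‖hinner (uext u h) (latC k.1)‖ / ‖((1 + α * nsq h : ℝ) : ℂ)‖
        ≤ 3 * N * ‖u‖ := by
      calc _ ≤ ‖hinner (uext u h) (latC k.1)‖ / 1 :=
            div_le_div_of_nonneg_left (norm_nonneg _) one_pos hden
        _ = ‖hinner (uext u h) (latC k.1)‖ := div_one _
        _ ≤ 3 * N * ‖u‖ := abs_hinner_latC_le k.2 _ (fun j' => abs_uext_le u h j')
    have h2 : ‖Pk k.1 (uext w (k.1 - h)) j‖ ≤ (1 + 3 * (N:ℝ)^2) * ‖w‖ :=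
      abs_Pk_le k.2 _ (fun j' => abs_uext_le w _ j') j
    exact mul_le_mul h1 h2 (norm_nonneg _) (by positivity)
  calc ‖∑ h ∈ (GammaN N).filter (fun h => (k.1:Z3) - h ∈ GammaN N), _‖
      ≤ ∑ h ∈ (GammaN N).filter (fun h => (k.1:Z3) - h ∈ GammaN N),
        ‖(hinner (uext u h) (latC k.1) / ((1 + α * nsq h : ℝ) : ℂ)) *
          Pk k.1 (uext w (k.1 - h)) j‖ := norm_sum_le _ _
    _ ≤ ∑ _h ∈ (GammaN N).filter (fun h => (k.1:Z3) - h ∈ GammaN N),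
        (3 * N * ‖u‖) * ((1 + 3 * (N:ℝ)^2) * ‖w‖) := Finset.sum_le_sum hterm
    _ = ((GammaN N).filter (fun h => (k.1:Z3) - h ∈ GammaN N)).card *
        ((3 * N * ‖u‖) * ((1 + 3 * (N:ℝ)^2) * ‖w‖)) := by
        rw [Finset.sum_const, nsmul_eq_mul]
    _ ≤ (GammaN N).card * ((3 * N * ‖u‖) * ((1 + 3 * (N:ℝ)^2) * ‖w‖)) := by
        have := Finset.card_filter_le (GammaN N) (fun h => (k.1:Z3) - h ∈ GammaN N)
        have hpos : (0:ℝ) ≤ (3 * N * ‖u‖) * ((1 + 3 * (N:ℝ)^2) * ‖w‖) := by positivity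
        exact mul_le_mul_of_nonneg_right (by exact_mod_cast this) hpos
    _ = CF N * ‖u‖ * ‖w‖ := by unfold CF; ring

lemma norm_F2_le {α : ℝ} (hα : 0 ≤ α) {N : ℕ} (u w : ES N) :
    ‖F2 α u w‖ ≤ CF N * ‖u‖ * ‖w‖ := by
  have hnn : (0:ℝ) ≤ CF N * ‖u‖ * ‖w‖ := by
    have := CF_nonneg N; positivity
  rw [pi_norm_le_iff_of_nonneg hnn]
  intro p
  exact abs_F2_le hα u w p


section Retract
variable {X : Type*} [NormedAddCommGroup X] [NormedSpace ℝ X]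

def rad (c : ℝ) (u : X) : X := if ‖u‖ ≤ c then u else (c / ‖u‖) • u

lemma rad_eq_of_le {c : ℝ} {u : X} (h : ‖u‖ ≤ c) : rad c u = u := by
  simp [rad, h]

lemma norm_rad_le {c : ℝ} (hc : 0 ≤ c) (u : X) : ‖rad c u‖ ≤ c := by
  unfold rad
  split_ifs with h
  · exact h
  · push_neg at h
    have hu : 0 < ‖u‖ := lt_of_le_of_lt hc h
    rw [norm_smul, Real.norm_eq_abs, abs_of_nonneg (by positivity)]
    rw [div_mul_cancel₀ _ (ne_of_gt hu)]

lemma norm_rad_sub_le_aux {c : ℝ} (hc : 0 ≤ c) {u v : X} (huv : ‖u‖ ≤ ‖v‖) :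
    ‖rad c u - rad c v‖ ≤ 2 * ‖u - v‖ := by
  have hnn : ‖u - v‖ ≥ 0 := norm_nonneg _
  by_cases hv : ‖v‖ ≤ c
  · rw [rad_eq_of_le (le_trans huv hv), rad_eq_of_le hv]
    linarith
  · push_neg at hv
    have hv0 : 0 < ‖v‖ := lt_of_le_of_lt hc hv
    have hvu : ‖v‖ - ‖u‖ ≤ ‖u - v‖ := by
      have := abs_norm_sub_norm_le v u
      rw [norm_sub_rev] at this
      exact le_trans (le_abs_self _) this
    by_cases hu : ‖u‖ ≤ c
    · rw [rad_eq_of_le hu]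
      unfold rad
      rw [if_neg (not_le.mpr hv)]
      calc ‖u - (c / ‖v‖) • v‖ ≤ ‖u - v‖ + ‖v - (c / ‖v‖) • v‖ := by
            have : u - (c / ‖v‖) • v = (u - v) + (v - (c / ‖v‖) • v) := by abel
            rw [this]; exact norm_add_le _ _
        _ = ‖u - v‖ + (‖v‖ - c) := by
            have : v - (c / ‖v‖) • v = (1 - c / ‖v‖) • v := by
              rw [sub_smul, one_smul]
            rw [this, norm_smul, Real.norm_eq_abs,
              abs_of_nonneg (by rw [sub_nonneg]; exact (div_le_one hv0).mpr hv.le)]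
            field_simp
        _ ≤ ‖u - v‖ + ‖u - v‖ := by
            have : ‖v‖ - c ≤ ‖v‖ - ‖u‖ := by linarith
            linarith
        _ = 2 * ‖u - v‖ := by ring
    · push_neg at hu
      have hu0 : 0 < ‖u‖ := lt_of_le_of_lt hc hu
      unfold rad
      rw [if_neg (not_le.mpr hu), if_neg (not_le.mpr hv)]
      have hsplit : (c / ‖u‖) • u - (c / ‖v‖) • v
          = (c / ‖u‖) • (u - v) + (c / ‖u‖ - c / ‖v‖) • v := by
        rw [smul_sub, sub_smul]; abel
      rw [hsplit]
      have h1 : ‖(c / ‖u‖) • (u - v)‖ ≤ ‖u - v‖ := by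
        rw [norm_smul, Real.norm_eq_abs, abs_of_nonneg (by positivity)]
        have : c / ‖u‖ ≤ 1 := (div_le_one hu0).mpr hu.le
        nlinarith
      have h2 : ‖(c / ‖u‖ - c / ‖v‖) • v‖ ≤ ‖u - v‖ := by
        rw [norm_smul, Real.norm_eq_abs]
        have hd : 0 ≤ ‖v‖ - ‖u‖ := by linarith
        have hge : 0 ≤ c / ‖u‖ - c / ‖v‖ := by
          have he : c / ‖u‖ - c / ‖v‖ = c * (‖v‖ - ‖u‖) / (‖u‖ * ‖v‖) := by
            field_simp
          rw [he]; positivity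
        rw [abs_of_nonneg hge]
        have key : (c / ‖u‖ - c / ‖v‖) * ‖v‖ = c * (‖v‖ - ‖u‖) / ‖u‖ := by
          field_simp
        rw [key]
        have hle : c * (‖v‖ - ‖u‖) / ‖u‖ ≤ ‖v‖ - ‖u‖ := by
          rw [div_le_iff₀ hu0]
          nlinarith
        linarith
      calc ‖_ + _‖ ≤ ‖(c / ‖u‖) • (u - v)‖ + ‖(c / ‖u‖ - c / ‖v‖) • v‖ := norm_add_le _ _
        _ ≤ 2 * ‖u - v‖ := by linarith

lemma norm_rad_sub_le {c : ℝ} (hc : 0 ≤ c) (u v : X) :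
    ‖rad c u - rad c v‖ ≤ 2 * ‖u - v‖ := by
  rcases le_total ‖u‖ ‖v‖ with h | h
  · exact norm_rad_sub_le_aux hc h
  · rw [norm_sub_rev, norm_sub_rev u v]
    exact norm_rad_sub_le_aux hc h

end Retract

def FR (α c : ℝ) {N : ℕ} (u : ES N) : ES N := F2 α (rad c u) (rad c u)

lemma norm_FR_le {α : ℝ} (hα : 0 ≤ α) {c : ℝ} (hc : 0 ≤ c) {N : ℕ} (u : ES N) :
    ‖FR α c u‖ ≤ CF N * c * c := by
  show ‖F2 α (rad c u) (rad c u)‖ ≤ CF N * c * c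
  have h := norm_F2_le hα (rad c u) (rad c u)
  have h1 := norm_rad_le hc u
  have h2 := norm_nonneg (rad c u)
  nlinarith [CF_nonneg N, mul_le_mul h1 h1 h2 hc,
    mul_le_mul_of_nonneg_left (mul_le_mul h1 h1 h2 hc) (CF_nonneg N)]

lemma lipschitz_FR {α : ℝ} (hα : 0 ≤ α) {c : ℝ} (hc : 0 ≤ c) {N : ℕ} :
    LipschitzWith (Real.toNNReal (4 * CF N * c)) (FR α c : ES N → ES N) := by
  apply LipschitzWith.of_dist_le_mul
  intro u v
  rw [dist_eq_norm, dist_eq_norm]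
  have hsplit : FR α c u - FR α c v
      = F2 α (rad c u) (rad c u - rad c v) + F2 α (rad c u - rad c v) (rad c v) := by
    rw [F2_sub_right, F2_sub_left]
    unfold FR
    abel
  have hCF := CF_nonneg N
  rw [hsplit, Real.coe_toNNReal _ (by positivity)]
  have hA := norm_F2_le hα (rad c u) (rad c u - rad c v)
  have hB := norm_F2_le hα (rad c u - rad c v) (rad c v)
  have h1 := norm_rad_le hc u
  have h2 := norm_rad_le hc v
  have h3 := norm_rad_sub_le hc u v
  have h4 := norm_nonneg (rad c u - rad c v)
  have h5 := norm_nonneg (u - v)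
  have h6 := norm_add_le (F2 α (rad c u) (rad c u - rad c v))
    (F2 α (rad c u - rad c v) (rad c v))
  have h7 := norm_nonneg (rad c u)
  have h8 := norm_nonneg (rad c v)
  nlinarith [mul_le_mul_of_nonneg_left h3 (mul_nonneg hCF hc),
    mul_le_mul_of_nonneg_right (mul_le_mul_of_nonneg_right h1 h4) hCF,
    mul_le_mul_of_nonneg_right (mul_le_mul_of_nonneg_right h2 h4) hCF]

lemma hinner_Pk_eq {k : Z3} (x y : C3) (hy : hinner y (latC k) = 0) :
    hinner (Pk k x) y = hinner x y := by
  rw [Pk, hinner_sub_left, hinner_smul_left]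
  have : hinner (latC k) y = 0 := by
    rw [hinner_comm, hy, map_zero]
  rw [this, mul_zero, sub_zero]

lemma re_energy_zero (α : ℝ) {N : ℕ} (u : ES N)
    (hdiv : ∀ k ∈ GammaN N, hinner (uext u k) (latC k) = 0)
    (hreal : sigmaE u = u) :
    (∑ p : Idx N × Fin 3, F2 α u u p * conj (u p)).re = 0 := by
  set T := ∑ p : Idx N × Fin 3, F2 α u u p * conj (u p) with hT
  -- Step 1: T as sum over Γ of hinner
  have step1 : T = ∑ k ∈ GammaN N,
      hinner (uext (F2 α u u) k) (uext u k) := by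
    rw [hT, Fintype.sum_prod_type, ← Finset.sum_coe_sort (GammaN N)
      (fun k => hinner (uext (F2 α u u) k) (uext u k))]
    refine Finset.sum_congr rfl (fun k _ => ?_)
    unfold hinner
    refine Finset.sum_congr rfl (fun j _ => ?_)
    rw [uext_apply _ k.2, uext_apply _ k.2]
  -- Step 2: expand
  have step2 : T = ∑ k ∈ GammaN N, ∑ h ∈ (GammaN N).filter (fun h => k - h ∈ GammaN N),
      (-Complex.I) * ((hinner (uext u h) (latC k) / ((1 + α * nsq h : ℝ) : ℂ)) *
        hinner (uext u (k - h)) (uext u k)) := by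
    rw [step1]
    refine Finset.sum_congr rfl (fun k hk => ?_)
    rw [uext_F2 α u u hk, hinner_smul_left, hinner_sum_left, Finset.mul_sum]
    refine Finset.sum_congr rfl (fun h _ => ?_)
    rw [hinner_smul_left, hinner_Pk_eq _ _ (hdiv k hk)]
  -- Step 3: as a sum over pairs
  set D := ((GammaN N) ×ˢ (GammaN N)).filter (fun q => q.1 - q.2 ∈ GammaN N) with hD
  set term : Z3 × Z3 → ℂ := fun q =>
    (-Complex.I) * ((hinner (uext u q.2) (latC q.1) / ((1 + α * nsq q.2 : ℝ) : ℂ)) *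
      hinner (uext u (q.1 - q.2)) (uext u q.1)) with hterm
  have step3 : T = ∑ q ∈ D, term q := by
    rw [step2, hD, Finset.sum_filter, Finset.sum_product]
    refine Finset.sum_congr rfl (fun k _ => ?_)
    rw [Finset.sum_filter]
  -- Step 4: conj T = -T
  have key : ∀ q ∈ D, conj (term q) = - term (q.1 - q.2, -q.2) := by
    intro q hq
    rw [hD, Finset.mem_filter, Finset.mem_product] at hq
    obtain ⟨⟨hk, hh⟩, hkh⟩ := hq
    rw [hterm]
    simp only
    rw [map_mul, map_mul, map_div₀, Complex.conj_ofReal, map_neg, Complex.conj_I]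
    have e1 : conj (hinner (uext u (q.1 - q.2)) (uext u q.1))
        = hinner (uext u q.1) (uext u (q.1 - q.2)) := by
      rw [hinner_comm (uext u q.1)]
    have e2 : hinner (uext u (-q.2)) (latC (q.1 - q.2))
        = conj (hinner (uext u q.2) (latC q.1)) := by
      have hσ : uext u (-q.2) = conjC3 (uext u q.2) := by
        conv_lhs => rw [← hreal]
        rw [uext_sigma, neg_neg]
      rw [hσ, latC_sub, hinner_sub_right, ← conj_hinner_latC, ← conj_hinner_latC,
        hdiv q.2 hh, map_zero, sub_zero]
    have e3 : (q.1 - q.2) - (-q.2) = q.1 := by ring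
    rw [e1, e2, e3, nsq_neg]
    ring
  have hmem : ∀ q ∈ D, (q.1 - q.2, -q.2) ∈ D := by
    intro q hq
    rw [hD, Finset.mem_filter, Finset.mem_product] at hq ⊢
    obtain ⟨⟨hk, hh⟩, hkh⟩ := hq
    refine ⟨⟨hkh, mem_gamma_neg hh⟩, ?_⟩
    have e3 : (q.1 - q.2) - (-q.2) = q.1 := by ring
    rw [e3]; exact hk
  have conjT : conj T = - T := by
    rw [step3, map_sum, ← Finset.sum_neg_distrib]
    refine Finset.sum_nbij' (fun q => (q.1 - q.2, -q.2)) (fun q => (q.1 - q.2, -q.2))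
      hmem hmem ?_ ?_ key
    · intro q _
      ext <;> simp
    · intro q _
      ext <;> simp
  -- conclude
  have : T + conj T = 0 := by rw [conjT]; ring
  have h2 : (T + conj T).re = 0 := by rw [this]; rfl
  rw [Complex.add_re, Complex.conj_re] at h2
  linarith

lemma exists_sol {α : ℝ} (hα : 0 ≤ α) {c : ℝ} (hc : 0 ≤ c) {N : ℕ} (y0 : ES N) (n : ℕ) :
    ∃ f : ℝ → ES N, f 0 = y0 ∧ ∀ t ∈ Set.Icc (0:ℝ) (n:ℝ),
      HasDerivWithinAt f (FR α c (f t)) (Set.Icc (0:ℝ) (n:ℝ)) t := by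
  have hpl : IsPicardLindelof (fun _ : ℝ => (FR α c : ES N → ES N))
      (tmin := 0) (tmax := n) ⟨0, Set.mem_Icc.mpr ⟨le_refl 0, Nat.cast_nonneg n⟩⟩ y0
      (Real.toNNReal (CF N * c * c) * (n : NNReal)) 0 (Real.toNNReal (CF N * c * c))
      (Real.toNNReal (4 * CF N * c)) := by
    refine ⟨?_, ?_, ?_, ?_⟩
    · intro t _
      exact (lipschitz_FR hα hc).lipschitzOnWith
    · intro x _
      exact continuousOn_const
    · intro t _ x _
      exact le_trans (norm_FR_le hα hc x) (Real.le_coe_toNNReal _)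
    · simp
  obtain ⟨f, hf0, hfd⟩ := hpl.exists_eq_forall_mem_Icc_hasDerivWithinAt₀
  exact ⟨f, hf0, hfd⟩

-- linear maps
def uextL {N : ℕ} (k : Z3) : ES N →ₗ[ℂ] C3 where
  toFun u := uext u k
  map_add' u w := uext_add u w k
  map_smul' c u := uext_smul c u k

def uextCLM {N : ℕ} (k : Z3) : ES N →L[ℂ] C3 :=
  LinearMap.toContinuousLinearMap (uextL k)

lemma uextCLM_apply {N : ℕ} (k : Z3) (u : ES N) : uextCLM k u = uext u k := rfl

def divL {N : ℕ} (k : Z3) : ES N →ₗ[ℂ] ℂ where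
  toFun u := hinner (uext u k) (latC k)
  map_add' u w := by
    show hinner (uext (u + w) k) (latC k) = _
    rw [uext_add, hinner_add_left]
  map_smul' c u := by
    show hinner (uext (c • u) k) (latC k) = _
    rw [uext_smul, hinner_smul_left]; rfl

def divCLM {N : ℕ} (k : Z3) : ES N →L[ℂ] ℂ :=
  LinearMap.toContinuousLinearMap (divL k)

lemma divCLM_apply {N : ℕ} (k : Z3) (u : ES N) : divCLM k u = hinner (uext u k) (latC k) := rfl

lemma real_smul_ES {N : ℕ} (r : ℝ) (u : ES N) : r • u = ((r : ℂ) • u) := by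
  funext p
  simp [Complex.real_smul]

def sigmaL {N : ℕ} : ES N →ₗ[ℝ] ES N where
  toFun := sigmaE
  map_add' u w := by funext p; simp [sigmaE]
  map_smul' r u := by
    funext p
    simp only [sigmaE, Pi.smul_apply, RingHom.id_apply]
    rw [Complex.real_smul, Complex.real_smul, map_mul, Complex.conj_ofReal]

def sigmaCLM {N : ℕ} : ES N →L[ℝ] ES N :=
  LinearMap.toContinuousLinearMap sigmaL

lemma sigmaCLM_apply {N : ℕ} (u : ES N) : sigmaCLM u = sigmaE u := rfl

lemma sigmaE_sigmaE {N : ℕ} (u : ES N) : sigmaE (sigmaE u) = u := by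
  funext p
  simp only [sigmaE, Complex.conj_conj]
  exact congrArg u (Prod.ext (Subtype.ext (neg_neg _)) rfl)

lemma norm_sigmaE {N : ℕ} (u : ES N) : ‖sigmaE u‖ = ‖u‖ := by
  have key : ∀ w : ES N, ‖sigmaE w‖ ≤ ‖w‖ := by
    intro w
    rw [pi_norm_le_iff_of_nonneg (norm_nonneg w)]
    intro p
    rw [show ‖sigmaE w p‖ = ‖w (⟨-p.1.1, mem_gamma_neg p.1.2⟩, p.2)‖ by
      simp [sigmaE]]
    exact norm_le_pi_norm w _
  refine le_antisymm (key u) ?_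
  have := key (sigmaE u)
  rwa [sigmaE_sigmaE] at this

lemma sigmaE_rad {N : ℕ} (c : ℝ) (u : ES N) : sigmaE (rad c u) = rad c (sigmaE u) := by
  unfold rad
  rw [norm_sigmaE]
  split_ifs with h
  · rfl
  · exact map_smul sigmaL _ u

lemma sigma_FR (α c : ℝ) {N : ℕ} (u : ES N) :
    sigmaE (FR α c u) = FR α c (sigmaE u) := by
  unfold FR
  rw [sigma_F2, sigmaE_rad]

lemma exists_global {α : ℝ} (hα : 0 ≤ α) {c : ℝ} (hc : 0 ≤ c) {N : ℕ} (y0 : ES N) :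
    ∃ v : ℝ → ES N, v 0 = y0 ∧ ∀ t ∈ Set.Ici (0:ℝ),
      HasDerivWithinAt v (FR α c (v t)) (Set.Ici (0:ℝ)) t := by
  choose f hf0 hfd using fun n : ℕ => exists_sol hα hc y0 n
  have hlip : ∀ t : ℝ, LipschitzWith (Real.toNNReal (4 * CF N * c))
      (fun u : ES N => FR α c u) := fun _ => lipschitz_FR hα hc
  have hderiv' : ∀ (n : ℕ) (t : ℝ), t ∈ Set.Ico (0:ℝ) (n:ℝ) →
      HasDerivWithinAt (f n) (FR α c (f n t)) (Set.Ici t) t := by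
    intro n t ht
    exact (hfd n t ⟨ht.1, ht.2.le⟩).mono_of_mem_nhdsWithin (Icc_mem_nhdsGE_of_mem ⟨ht.1, ht.2⟩)
  have hcont : ∀ n : ℕ, ContinuousOn (f n) (Set.Icc 0 (n:ℝ)) := fun n t ht =>
    (hfd n t ht).continuousWithinAt
  have heq : ∀ (m n : ℕ), m ≤ n → Set.EqOn (f m) (f n) (Set.Icc 0 (m:ℝ)) := by
    intro m n hmn
    have hmn' : (m:ℝ) ≤ n := by exact_mod_cast hmn
    refine ODE_solution_unique (v := fun _ (u : ES N) => FR α c u) hlip (hcont m)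
      (fun t ht => hderiv' m t ht)
      ((hcont n).mono (Set.Icc_subset_Icc_right hmn'))
      (fun t ht => hderiv' n t ⟨ht.1, lt_of_lt_of_le ht.2 hmn'⟩)
      (by rw [hf0, hf0])
  set v : ℝ → ES N := fun t => f (⌊t⌋₊ + 1) t with hv
  have hconsist : ∀ (n : ℕ) (t : ℝ), t ∈ Set.Icc (0:ℝ) (n:ℝ) → v t = f n t := by
    intro n t ht
    have htm : t < (⌊t⌋₊ + 1 : ℕ) := by
      push_cast
      exact Nat.lt_floor_add_one t
    rcases le_total (⌊t⌋₊ + 1) n with h | h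
    · exact heq _ n h ⟨ht.1, htm.le⟩
    · exact (heq n _ h ⟨ht.1, ht.2⟩).symm
  refine ⟨v, ?_, ?_⟩
  · have : v 0 = f 1 0 := hconsist 1 0 (by norm_num)
    rw [this, hf0]
  · intro t ht
    rw [Set.mem_Ici] at ht
    have htm : t < ((⌊t⌋₊ + 1 : ℕ) : ℝ) := by
      push_cast
      exact Nat.lt_floor_add_one t
    have h1 := hfd (⌊t⌋₊ + 1) t ⟨ht, htm.le⟩
    have h2 : Set.Icc (0:ℝ) ((⌊t⌋₊ + 1 : ℕ) : ℝ) ∈ nhdsWithin t (Set.Ici (0:ℝ)) := by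
      rw [mem_nhdsWithin]
      exact ⟨Set.Iio _, isOpen_Iio, htm, by rintro x ⟨hx1, hx2⟩; exact ⟨hx2, le_of_lt hx1⟩⟩
    have h3 := h1.mono_of_mem_nhdsWithin h2
    have hev : (fun s => v s) =ᶠ[nhdsWithin t (Set.Ici (0:ℝ))] f (⌊t⌋₊ + 1) :=
      Filter.eventuallyEq_of_mem h2 (fun x hx => hconsist _ x hx)
    have h4 := h3.congr_of_eventuallyEq hev (hconsist _ t ⟨ht, htm.le⟩)
    rwa [show f (⌊t⌋₊ + 1) t = v t from (hconsist _ t ⟨ht, htm.le⟩).symm] at h4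

lemma const_of_zero_deriv {Y : Type*} [NormedAddCommGroup Y] [NormedSpace ℝ Y] {φ : ℝ → Y}
    (h : ∀ t ∈ Set.Ici (0:ℝ), HasDerivWithinAt φ 0 (Set.Ici (0:ℝ)) t) {t : ℝ} (ht : 0 ≤ t) :
    φ t = φ 0 := by
  refine constant_of_has_deriv_right_zero (f := φ) (a := 0) (b := t)
    (fun s hs => ((h s hs.1).continuousWithinAt).mono Set.Icc_subset_Ici_self)
    (fun s hs => (h s hs.1).mono (Set.Ici_subset_Ici.mpr hs.1)) t ⟨ht, le_refl t⟩

lemma re_sum_eq {N : ℕ} (w : ES N) :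
    (∑ p : Idx N × Fin 3, (w p * conj (w p))).re = ∑ p : Idx N × Fin 3, Complex.normSq (w p) := by
  rw [Complex.re_sum]
  refine Finset.sum_congr rfl (fun p _ => ?_)
  rw [Complex.mul_conj, Complex.ofReal_re]

lemma sum_norm_sq_eq {N : ℕ} (w : ES N) :
    ∑ k ∈ GammaN N, ‖uext w k‖^2 = (∑ p : Idx N × Fin 3, (w p * conj (w p))).re := by
  rw [re_sum_eq, Fintype.sum_prod_type, ← Finset.sum_coe_sort (GammaN N)
    (fun k => ‖uext w k‖^2)]
  refine Finset.sum_congr rfl (fun k _ => ?_)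
  rw [EuclideanSpace.norm_eq, Real.sq_sqrt (by positivity)]
  refine Finset.sum_congr rfl (fun j _ => ?_)
  rw [uext_apply _ k.2, Complex.normSq_eq_norm_sq]

end Gal

set_option maxHeartbeats 1000000 in
open Gal in
/-- for `α ≥ 0`, `N ∈ ℕ` and initial data `y_k` (`k ∈ Γ_N`) satisfying the
incompressibility and reality constraints, the Galerkin system of the inviscid Leray-α model
has a global-in-time solution on `[0,∞)` with the given initial data, which preserves the
constraints and conserves the energy `∑_{k ∈ Γ_N} ‖v_k(t)‖² = ∑_{k ∈ Γ_N} ‖y_k‖²`. -/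
theorem galerkin_global_existence (α : ℝ) (hα : 0 ≤ α) (N : ℕ) (y : Z3 → C3)
    (hydiv : ∀ k ∈ GammaN N, hinner (y k) (latC k) = 0)
    (hyconj : ∀ k ∈ GammaN N, y (-k) = conjC3 (y k)) :
    ∃ v : Z3 → ℝ → C3,
      (∀ k ∈ GammaN N, v k 0 = y k) ∧
      (∀ t : ℝ, 0 ≤ t → ∀ k ∈ GammaN N,
        HasDerivWithinAt (v k)
          ((-Complex.I) • ∑ h ∈ (GammaN N).filter (fun h => k - h ∈ GammaN N),
            (hinner (v h t) (latC k) / ((1 + α * nsq h : ℝ) : ℂ)) • Pk k (v (k - h) t))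
          (Set.Ici (0:ℝ)) t) ∧
      (∀ t : ℝ, 0 ≤ t → ∀ k ∈ GammaN N,
        hinner (v k t) (latC k) = 0 ∧ v (-k) t = conjC3 (v k t)) ∧
      (∀ t : ℝ, 0 ≤ t →
        ∑ k ∈ GammaN N, ‖v k t‖ ^ 2 = ∑ k ∈ GammaN N, ‖y k‖ ^ 2) := by
  classical
  set y0 : ES N := fun p => y p.1.1 p.2 with hy0def
  have huext_y0 : ∀ (k : Z3), k ∈ GammaN N → uext y0 k = y k := by
    intro k hk
    ext j
    rw [uext_apply _ hk]
  have hy0real : sigmaE y0 = y0 := by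
    funext p
    show conj (y (-(p.1.1 : Z3)) p.2) = y p.1.1 p.2
    rw [hyconj p.1.1 p.1.2]
    exact Complex.conj_conj _
  set ρ : ℝ := Real.sqrt (∑ p : Idx N × Fin 3, Complex.normSq (y0 p)) with hρdef
  have hρ0 : 0 ≤ ρ := Real.sqrt_nonneg _
  set c : ℝ := ρ + 1 with hcdef
  have hc : 0 ≤ c := by linarith
  obtain ⟨v, hv0, hvd⟩ := exists_global (α := α) hα (c := c) hc y0
  -- (A) divergence-free for all time
  have hdiv : ∀ t, 0 ≤ t → ∀ k ∈ GammaN N, hinner (uext (v t) k) (latC k) = 0 := by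
    intro t ht k hk
    have hconst : ((divCLM (N := N) k).restrictScalars ℝ) (v t)
        = ((divCLM (N := N) k).restrictScalars ℝ) (v 0) := by
      refine const_of_zero_deriv
        (φ := fun s => ((divCLM (N := N) k).restrictScalars ℝ) (v s)) ?_ ht
      intro s hs
      have h2 := ((divCLM (N := N) k).restrictScalars ℝ).hasFDerivAt.comp_hasDerivWithinAt
        s (hvd s hs)
      have h3 : ((divCLM (N := N) k).restrictScalars ℝ) (FR α c (v s)) = 0 := by
        show divCLM (N := N) k (FR α c (v s)) = 0
        rw [divCLM_apply]
        exact divfree_F2 α _ _ hk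
      rwa [h3] at h2
    have h0 : divCLM (N := N) k (v 0) = 0 := by
      rw [hv0, divCLM_apply, huext_y0 k hk]
      exact hydiv k hk
    show divCLM (N := N) k (v t) = 0
    calc divCLM (N := N) k (v t) = divCLM (N := N) k (v 0) := hconst
      _ = 0 := h0
  -- (B) reality for all time
  have hreal : ∀ t, 0 ≤ t → sigmaE (v t) = v t := by
    intro t ht
    have hcv : ContinuousOn v (Set.Icc 0 t) := fun s hs =>
      ((hvd s hs.1).continuousWithinAt).mono Set.Icc_subset_Ici_self
    have hcg : ContinuousOn (fun τ => sigmaCLM (N := N) (v τ)) (Set.Icc 0 t) :=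
      (sigmaCLM (N := N)).continuous.comp_continuousOn hcv
    have hg : ∀ s ∈ Set.Ico (0:ℝ) t, HasDerivWithinAt (fun τ => sigmaCLM (N := N) (v τ))
        (FR α c (sigmaCLM (N := N) (v s))) (Set.Ici s) s := by
      intro s hs
      have hd := (hvd s hs.1).mono (Set.Ici_subset_Ici.mpr hs.1)
      have h2 := (sigmaCLM (N := N)).hasFDerivAt.comp_hasDerivWithinAt s hd
      have h3 : sigmaCLM (N := N) (FR α c (v s)) = FR α c (sigmaCLM (N := N) (v s)) := by
        rw [sigmaCLM_apply, sigmaCLM_apply, sigma_FR]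
      rwa [h3] at h2
    have hf : ∀ s ∈ Set.Ico (0:ℝ) t, HasDerivWithinAt v (FR α c (v s)) (Set.Ici s) s :=
      fun s hs => (hvd s hs.1).mono (Set.Ici_subset_Ici.mpr hs.1)
    have h0 : (fun τ => sigmaCLM (N := N) (v τ)) 0 = v 0 := by
      show sigmaE (v 0) = v 0
      rw [hv0]
      exact hy0real
    have := ODE_solution_unique (v := fun _ (u : ES N) => FR α c u)
      (fun _ => lipschitz_FR hα hc) hcg hg hcv hf h0 ⟨ht, le_refl t⟩
    exact this
  -- (C) energy conservation
  have henergy : ∀ t, 0 ≤ t →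
      (∑ p : Idx N × Fin 3, (v t p * conj (v t p))).re
      = (∑ p : Idx N × Fin 3, (y0 p * conj (y0 p))).re := by
    intro t ht
    have hconst := const_of_zero_deriv
      (φ := fun s => (∑ p : Idx N × Fin 3, (v s p * conj (v s p))).re) ?_ ht
    · have h' : (∑ p : Idx N × Fin 3, (v t p * conj (v t p))).re
          = (∑ p : Idx N × Fin 3, (v 0 p * conj (v 0 p))).re := hconst
      rw [hv0] at h'
      exact h'
    intro s hs
    obtain ⟨r, hrad⟩ : ∃ r : ℝ, rad c (v s) = (r:ℂ) • (v s) := by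
      by_cases h : ‖v s‖ ≤ c
      · exact ⟨1, by rw [rad_eq_of_le h]; simp⟩
      · refine ⟨c / ‖v s‖, ?_⟩
        unfold rad
        rw [if_neg h, ← real_smul_ES]
    have hd2 : ∀ p, FR α c (v s) p = ((r:ℂ) * (r:ℂ)) * F2 α (v s) (v s) p := by
      intro p
      show F2 α (rad c (v s)) (rad c (v s)) p = _
      rw [hrad, F2_smul_left, F2_smul_right]
      show (r:ℂ) • (((r:ℂ) • F2 α (v s) (v s)) p) = _
      simp only [Pi.smul_apply, smul_eq_mul]
      ring
    have hterm : ∀ p ∈ (Finset.univ : Finset (Idx N × Fin 3)),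
        HasDerivWithinAt (fun τ => v τ p * conj (v τ p))
          (FR α c (v s) p * conj (v s p) + v s p * conj (FR α c (v s) p))
          (Set.Ici 0) s := by
      intro p _
      have hp : HasDerivWithinAt (fun τ => v τ p) (FR α c (v s) p) (Set.Ici 0) s :=
        ((ContinuousLinearMap.proj (R := ℂ) (φ := fun _ : Idx N × Fin 3 => ℂ)
          p).restrictScalars ℝ).hasFDerivAt.comp_hasDerivWithinAt s (hvd s hs)
      have hq : HasDerivWithinAt (fun τ => conj (v τ p)) (conj (FR α c (v s) p))
          (Set.Ici 0) s := hp.star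
      exact hp.mul hq
    have hsum := HasDerivWithinAt.sum hterm
    have hre := (Complex.reCLM.hasFDerivAt).comp_hasDerivWithinAt s hsum
    have hval : (∑ p : Idx N × Fin 3,
        (FR α c (v s) p * conj (v s p) + v s p * conj (FR α c (v s) p))).re = 0 := by
      have e1 : ∑ p : Idx N × Fin 3, FR α c (v s) p * conj (v s p)
          = ((r:ℂ) * (r:ℂ)) * ∑ p : Idx N × Fin 3, F2 α (v s) (v s) p * conj (v s p) := by
        rw [Finset.mul_sum]
        refine Finset.sum_congr rfl (fun p _ => ?_)
        rw [hd2 p]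
        ring
      have e2 : ∑ p : Idx N × Fin 3, v s p * conj (FR α c (v s) p)
          = conj (((r:ℂ) * (r:ℂ)) *
            ∑ p : Idx N × Fin 3, F2 α (v s) (v s) p * conj (v s p)) := by
        rw [map_mul, map_sum, Finset.mul_sum]
        refine Finset.sum_congr rfl (fun p _ => ?_)
        rw [hd2 p]
        simp only [map_mul, Complex.conj_conj]
        ring
      rw [Finset.sum_add_distrib, e1, e2, Complex.add_re, Complex.conj_re]
      have hT0re : (∑ p : Idx N × Fin 3, F2 α (v s) (v s) p * conj (v s p)).re = 0 :=
        re_energy_zero α (v s) (fun k hk => hdiv s hs k hk) (hreal s hs)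
      have e3 : (((r:ℂ) * (r:ℂ)) *
          ∑ p : Idx N × Fin 3, F2 α (v s) (v s) p * conj (v s p)).re
          = (r * r) * (∑ p : Idx N × Fin 3, F2 α (v s) (v s) p * conj (v s p)).re := by
        rw [show ((r:ℂ) * (r:ℂ)) = (((r * r : ℝ)) : ℂ) by push_cast; ring,
          Complex.re_ofReal_mul]
      rw [e3, hT0re]
      ring
    have hval' : Complex.reCLM (∑ p : Idx N × Fin 3,
        (FR α c (v s) p * conj (v s p) + v s p * conj (FR α c (v s) p))) = 0 := hval
    rw [hval'] at hre
    convert hre using 1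
    funext τ
    simp only [Function.comp_apply, Finset.sum_apply, Complex.reCLM_apply]
  -- (D) norm bound and fixing the retraction
  have hsumy0 : ∑ p : Idx N × Fin 3, Complex.normSq (y0 p) = ρ^2 := by
    rw [hρdef, Real.sq_sqrt (Finset.sum_nonneg (fun p _ => Complex.normSq_nonneg _))]
  have hnorm : ∀ t, 0 ≤ t → ‖v t‖ ≤ ρ := by
    intro t ht
    rw [pi_norm_le_iff_of_nonneg hρ0]
    intro p
    have h1 : ∑ q : Idx N × Fin 3, Complex.normSq (v t q) = ρ^2 := by
      have := henergy t ht
      rw [re_sum_eq, re_sum_eq] at this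
      rw [this, hsumy0]
    have h2 : Complex.normSq (v t p) ≤ ρ^2 := by
      rw [← h1]
      exact Finset.single_le_sum (f := fun q => Complex.normSq (v t q))
        (fun q _ => Complex.normSq_nonneg _) (Finset.mem_univ p)
    calc ‖v t p‖ = Real.sqrt (Complex.normSq (v t p)) := by
          rw [Complex.norm_def]
      _ ≤ Real.sqrt (ρ^2) := Real.sqrt_le_sqrt h2
      _ = ρ := by rw [Real.sqrt_sq hρ0]
  have hfix : ∀ t, 0 ≤ t → FR α c (v t) = F2 α (v t) (v t) := by
    intro t ht
    show F2 α (rad c (v t)) (rad c (v t)) = _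
    rw [rad_eq_of_le (le_trans (hnorm t ht) (by rw [hcdef]; linarith))]
  -- assemble
  refine ⟨fun k t => uext (v t) k, ?_, ?_, ?_, ?_⟩
  · intro k hk
    show uext (v 0) k = y k
    rw [hv0, huext_y0 k hk]
  · intro t ht k hk
    have h2 := ((uextCLM (N := N) k).restrictScalars ℝ).hasFDerivAt.comp_hasDerivWithinAt
      t (hvd t ht)
    have h3 : ((uextCLM (N := N) k).restrictScalars ℝ) (FR α c (v t))
        = (-Complex.I) • ∑ h ∈ (GammaN N).filter (fun h => k - h ∈ GammaN N),
          (hinner (uext (v t) h) (latC k) / ((1 + α * nsq h : ℝ) : ℂ)) •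
            Pk k (uext (v t) (k - h)) := by
      show uext (FR α c (v t)) k = _
      rw [hfix t ht, uext_F2 α _ _ hk]
    rwa [h3] at h2
  · intro t ht k hk
    refine ⟨hdiv t ht k hk, ?_⟩
    show uext (v t) (-k) = conjC3 (uext (v t) k)
    conv_lhs => rw [← hreal t ht]
    rw [uext_sigma, neg_neg]
  · intro t ht
    have e1 : ∑ k ∈ GammaN N, ‖uext (v t) k‖^2 = ∑ k ∈ GammaN N, ‖uext y0 k‖^2 := by
      rw [sum_norm_sq_eq, sum_norm_sq_eq, henergy t ht]
    calc ∑ k ∈ GammaN N, ‖uext (v t) k‖^2 = ∑ k ∈ GammaN N, ‖uext y0 k‖^2 := e1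
      _ = ∑ k ∈ GammaN N, ‖y k‖^2 :=
        Finset.sum_congr rfl (fun k hk => by rw [huext_y0 k hk])
end
end

section
/- Let α ≥ 0, N ∈ ℕ and let v_k : ℝ → ℂ³ (k ∈ Γ_N) be differentiable functions satisfying the Galerkin system dv_k/dt(t) = −i Σ_{h ∈ Γ_N, k−h ∈ Γ_N} (⟨v_h(t),k⟩/(1+α‖h‖²)) P_k(v_{k−h}(t)). Then for each k ∈ Γ_N the quantity ⟨v_k(t), k⟩ is constant in t; in particular if ⟨v_k(0), k⟩ = 0 then ⟨v_k(t), k⟩ = 0 for all t (the incompressibility constraint is preserved by the flow). -/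
open scoped BigOperators ComplexConjugate

noncomputable section

lemma hinner_latC_self_ne (k : Z3) (hk : k ≠ 0) : hinner (latC k) (latC k) ≠ 0 := by
  have : hinner (latC k) (latC k) = ((nsq k : ℝ) : ℂ) := by
    simp [hinner, latC, nsq, Complex.conj_ofReal]
    ring_nf
  rw [this]
  have hpos : 0 < nsq k := by
    rcases Function.ne_iff.1 hk with ⟨j, hj⟩
    have hj' : k j ≠ 0 := hj
    have h1 : (0:ℝ) < ((k j : ℝ))^2 := by
      have : (k j : ℝ) ≠ 0 := Int.cast_ne_zero.2 hj'
      positivity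
    refine Finset.sum_pos' (fun i _ => sq_nonneg _) ⟨j, Finset.mem_univ j, h1⟩
  exact Complex.ofReal_ne_zero.2 hpos.ne'

/-- along any solution of the Galerkin system of the inviscid Leray-α model on the
modes `Γ_N`, the quantity `⟨v_k(t), k⟩` is constant in time for each `k ∈ Γ_N`; in particular
the incompressibility constraint is preserved by the flow. -/
theorem galerkin_incompressibility_preserved (α : ℝ) (hα : 0 ≤ α) (N : ℕ) (v : Z3 → ℝ → C3)
    (hdiff : ∀ t : ℝ, ∀ k ∈ GammaN N,
      HasDerivAt (v k)
        ((-Complex.I) • ∑ h ∈ (GammaN N).filter (fun h => k - h ∈ GammaN N),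
          (hinner (v h t) (latC k) / ((1 + α * nsq h : ℝ) : ℂ)) • Pk k (v (k - h) t)) t) :
    ∀ k ∈ GammaN N,
      (∀ t s : ℝ, hinner (v k t) (latC k) = hinner (v k s) (latC k)) ∧
      (hinner (v k 0) (latC k) = 0 → ∀ t : ℝ, hinner (v k t) (latC k) = 0) := by
  intro k hk
  have hk0 : k ≠ 0 := ((Finset.mem_filter.1 hk).2).1
  set L : C3 →L[ℂ] ℂ := innerSL ℂ (latC k) with hL
  have hLP : ∀ w : C3, L (Pk k w) = 0 := by
    intro w
    have hne := hinner_latC_self_ne k hk0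
    have hsub : ∀ a b : C3, hinner (a - b) (latC k) = hinner a (latC k) - hinner b (latC k) := by
      intro a b
      simp [hinner, sub_mul, Finset.sum_sub_distrib]
    have hsmul : ∀ (c : ℂ) (x : C3), hinner (c • x) (latC k) = c * hinner x (latC k) := by
      intro c x
      simp [hinner, Finset.mul_sum, mul_assoc]
    simp only [hL, innerSL_apply_apply, ← hinner_eq_inner, Pk]
    rw [hsub, hsmul, div_mul_cancel₀ _ hne, sub_self]
  have key : ∀ t, HasDerivAt (fun t => hinner (v k t) (latC k)) 0 t := by
    intro t
    have h1 := (hdiff t k hk)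
    have h2 : HasDerivAt (fun t => L (v k t))
        (L ((-Complex.I) • ∑ h ∈ (GammaN N).filter (fun h => k - h ∈ GammaN N),
          (hinner (v h t) (latC k) / ((1 + α * nsq h : ℝ) : ℂ)) • Pk k (v (k - h) t))) t :=
      ((L.restrictScalars ℝ).hasFDerivAt (x := v k t)).comp_hasDerivAt t h1
    have : L ((-Complex.I) • ∑ h ∈ (GammaN N).filter (fun h => k - h ∈ GammaN N),
          (hinner (v h t) (latC k) / ((1 + α * nsq h : ℝ) : ℂ)) • Pk k (v (k - h) t)) = 0 := by
      rw [map_smul, map_sum]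
      simp only [map_smul, hLP, smul_zero, Finset.sum_const_zero]
    rw [this] at h2
    have : (fun t => hinner (v k t) (latC k)) = fun t => L (v k t) := by
      ext t; simp [hL, hinner_eq_inner]
    rw [this]
    exact h2
  constructor
  · intro t s
    exact is_const_of_deriv_eq_zero (fun x => (key x).differentiableAt)
      (fun x => (key x).deriv) t s
  · intro h0 t
    have := is_const_of_deriv_eq_zero (f := fun t => hinner (v k t) (latC k))
      (fun x => (key x).differentiableAt) (fun x => (key x).deriv) t 0
    rw [this, h0]
end
end
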